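/- arXiv:1201.0678 — 3 statements merged into one kernel-verified Lean document; each statement's English description precedes it below -/
import Mathlib

section
/- Let R be a commutative ring. If Pic(R') is a torsion group for every finite and finitely presented R-algebra R', then Pic(R') is a torsion group for every R-algebra R' that is integral over R. -/
open scoped TensorProduct

/-- A module is invertible (of rank one) if it is finitely generated, projective, and has
a tensor inverse. -/
def IsInvertibleModule (R : Type) [CommRing R] (M : Type) [AddCommGroup M] [Module R M] :
    Prop :=
  Module.Finite R M ∧ Module.Projective R M ∧
    ∃ (N : Type) (_ : AddCommGroup N) (_ : Module R N),
      Nonempty ((M ⊗[R] N) ≃ₗ[R] R)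

/-- The Picard group of R is torsion: every invertible R-module has a tensor power
isomorphic to R. -/
def PicIsTorsion (R : Type) [CommRing R] : Prop :=
  ∀ (M : Type) (_ : AddCommGroup M) (_ : Module R M), IsInvertibleModule R M →
    ∃ n : ℕ, 0 < n ∧ Nonempty ((⨂[R] _ : Fin n, M) ≃ₗ[R] R)

/-!
An invertible module `M` over `R'` is the image of a rank-one idempotent matrix: if `∑ fᵢ ⊗ mᵢ`
is the element of `Mᵛ ⊗ M` corresponding to `1`, the matrix `(fᵢ mⱼ)` has trace one and vanishing
`2 × 2` minors. When `R'` is integral over `R`, its finitely many entries and these finitely many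
polynomial conditions already live in a finite, finitely presented `R`-algebra `A` (adjoin roots
of monic polynomials, then divide by the conditions), and the image of the lifted matrix is an
invertible `A`-module whose base change to `R'` is `M`. So every class in `Pic R'` comes from
some `Pic A`, which is torsion.
-/

universe u

open TensorProduct CommRing

theorem isInvertibleModule_iff_invertible {R : Type} [CommRing R] {M : Type} [AddCommGroup M]
    [Module R M] : IsInvertibleModule R M ↔ Module.Invertible R M :=
  ⟨fun ⟨_, _, _, _, _, ⟨φ⟩⟩ ↦ .left φ, fun _ ↦ ⟨inferInstance, inferInstance, Module.Dual R M,
    inferInstance, inferInstance, ⟨TensorProduct.comm R M _ ≪≫ₗ Module.Invertible.linearEquiv R M⟩⟩⟩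

section TensorPower

variable (R : Type u) (M : Type*) [CommSemiring R] [AddCommMonoid M] [Module R M]

noncomputable def TensorPower.succEquiv (n : ℕ) : ⨂[R]^n M ⊗[R] M ≃ₗ[R] ⨂[R]^(n + 1) M :=
  TensorProduct.congr (.refl R _)
    (PiTensorProduct.subsingletonEquiv (s := fun _ : Fin 1 ↦ M) 0).symm ≪≫ₗ TensorPower.mulEquiv

variable [Module.Invertible R M]

instance Module.Invertible.tensorPower (n : ℕ) : Module.Invertible R (⨂[R]^n M) := by
  induction n with
  | zero => exact .congr TensorPower.algebraMap₀
  | succ n ih => exact .congr (TensorPower.succEquiv R M n)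

theorem CommRing.Pic.mk_tensorPower (n : ℕ) : Pic.mk R (⨂[R]^n M) = Pic.mk R M ^ n := by
  induction n with
  | zero => exact Pic.mk_eq_one_iff.mpr ⟨TensorPower.algebraMap₀.symm⟩
  | succ n ih =>
    rw [pow_succ, ← ih, ← Pic.mk_tensor, Pic.mk_eq_mk_iff]
    exact ⟨(TensorPower.succEquiv R M n).symm⟩

end TensorPower

theorem picIsTorsion_iff_isMulTorsion (R : Type) [CommRing R] :
    PicIsTorsion R ↔ IsMulTorsion (Pic R) := by
  refine ⟨fun h x ↦ ?_, fun h M _ _ hM ↦ ?_⟩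
  · obtain ⟨n, hn, ⟨e⟩⟩ := h x _ _ (isInvertibleModule_iff_invertible.mpr inferInstance)
    refine isOfFinOrder_iff_pow_eq_one.mpr ⟨n, hn, ?_⟩
    rw [← Pic.mk_eq_self (M := x), ← Pic.mk_tensorPower, Pic.mk_eq_one_iff]
    exact ⟨e⟩
  · have := isInvertibleModule_iff_invertible.mp hM
    obtain ⟨n, hn, hpow⟩ := (h (Pic.mk R M)).exists_pow_eq_one
    exact ⟨n, hn, Pic.mk_eq_one_iff.mp (by rw [Pic.mk_tensorPower, hpow])⟩

namespace Matrix

variable {A : Type*} [CommRing A] {ι : Type*} [Fintype ι]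

structure IsRankOneIdempotent (E : Matrix ι ι A) : Prop where
  trace_eq_one : E.trace = 1
  mul_mul_comm : ∀ i j k l, E i j * E k l = E i l * E k j

def rankOneIdempotentIdeal (E : Matrix ι ι A) : Ideal A :=
  Ideal.span <| insert (E.trace - 1) <| Set.range fun p : ι × ι × ι × ι ↦
    E p.1 p.2.1 * E p.2.2.1 p.2.2.2 - E p.1 p.2.2.2 * E p.2.2.1 p.2.1

theorem rankOneIdempotentIdeal_fg (E : Matrix ι ι A) : E.rankOneIdempotentIdeal.FG :=
  Submodule.fg_span ((Set.finite_range _).insert _)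

theorem isRankOneIdempotent_map_iff {B F : Type*} [CommRing B] [FunLike F A B]
    [RingHomClass F A B] {E : Matrix ι ι A} (f : F) :
    (E.map f).IsRankOneIdempotent ↔ E.rankOneIdempotentIdeal ≤ RingHom.ker f := by
  simp only [rankOneIdempotentIdeal, Ideal.span_le, Set.insert_subset_iff, Set.range_subset_iff,
    SetLike.mem_coe, RingHom.mem_ker, map_sub, map_one, map_mul, sub_eq_zero,
    AddMonoidHom.map_trace, Prod.forall]
  exact ⟨fun h ↦ ⟨h.1, h.2⟩, fun h ↦ ⟨h.1, h.2⟩⟩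

namespace IsRankOneIdempotent

variable {E : Matrix ι ι A}

theorem mul_self (hE : E.IsRankOneIdempotent) : E * E = E := by
  ext i j
  calc ∑ k, E i k * E k j = ∑ k, E i j * E k k := by simp only [hE.mul_mul_comm i _ _ j]
    _ = E i j * E.trace := Finset.mul_sum .. |>.symm
    _ = E i j := by rw [hE.trace_eq_one, mul_one]

theorem map {B : Type*} [CommRing B] (hE : E.IsRankOneIdempotent) (f : A →+* B) :
    (E.map f).IsRankOneIdempotent where
  trace_eq_one := by rw [← AddMonoidHom.map_trace, hE.trace_eq_one, map_one]
  mul_mul_comm i j k l := by simp only [map_apply, ← map_mul, hE.mul_mul_comm i j k l]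

variable [DecidableEq ι]

theorem invertible_range_mulVecLin (hE : E.IsRankOneIdempotent) :
    Module.Invertible A (LinearMap.range E.mulVecLin) := by
  -- The inverse is the image `Q` of `Eᵀ`, paired with `P` by the dot product.
  set P := LinearMap.range E.mulVecLin
  set Q := LinearMap.range Eᵀ.mulVecLin
  let col (j : ι) : P := E.mulVecLin.rangeRestrict (Pi.single j 1)
  let row (l : ι) : Q := Eᵀ.mulVecLin.rangeRestrict (Pi.single l 1)
  have col_apply (j a : ι) : (col j : ι → A) a = E a j := by simp [col]
  have row_apply (l b : ι) : (row l : ι → A) b = E l b := by simp [row]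
  let β : P ⊗[A] Q →ₗ[A] A := lift ((dotProductBilin A A).compl₁₂ P.subtype Q.subtype)
  let ω : P ⊗[A] Q := ∑ i, col i ⊗ₜ row i
  have hβ (j l : ι) : β (col j ⊗ₜ row l) = E l j := by
    simp only [β, lift.tmul, LinearMap.compl₁₂_apply, dotProductBilin_apply_apply, dotProduct,
      Submodule.subtype_apply, col_apply, row_apply]
    calc ∑ a, E a j * E l a = (E * E) l j := by simp only [mul_apply, mul_comm]
      _ = E l j := by rw [hE.mul_self]
  have hβω : β ω = 1 := by
    simp only [ω, map_sum, hβ, ← hE.trace_eq_one, trace, diag]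
  have smul_col (i j l : ι) : E l j • col i = E l i • col j := by
    ext a
    simp only [SetLike.val_smul, Pi.smul_apply, col_apply, smul_eq_mul]
    linear_combination hE.mul_mul_comm l j a i
  have sum_smul_row (l : ι) : ∑ i, E l i • row i = row l := by
    ext b
    simp only [Submodule.coe_sum, SetLike.val_smul, Finset.sum_apply, Pi.smul_apply, row_apply,
      smul_eq_mul]
    rw [← mul_apply, hE.mul_self]
  have smul_ω (j l : ι) : E l j • ω = col j ⊗ₜ row l := by
    simp only [ω, Finset.smul_sum, smul_tmul', smul_col _ j, smul_tmul, ← tmul_sum, sum_smul_row]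
  refine .left (LinearEquiv.ofLinearMap β (LinearMap.toSpanSingleton A _ ω) ?_ ?_)
  · ext
    simp [hβω]
  · refine (LinearMap.cancel_right (TensorProduct.map_surjective
      E.mulVecLin.surjective_rangeRestrict Eᵀ.mulVecLin.surjective_rangeRestrict)).mp ?_
    ext j l
    change β (col j ⊗ₜ row l) • ω = col j ⊗ₜ row l
    rw [hβ, smul_ω]

end IsRankOneIdempotent

end Matrix

namespace Matrix.IsRankOneIdempotent

variable {A : Type u} [CommRing A] {ι : Type*} [Fintype ι] [DecidableEq ι] {E : Matrix ι ι A}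

noncomputable def picClass (hE : E.IsRankOneIdempotent) : Pic A :=
  have := hE.invertible_range_mulVecLin
  Pic.mk A (LinearMap.range E.mulVecLin)

theorem picClass_eq_iff (hE : E.IsRankOneIdempotent) {x : Pic A} :
    hE.picClass = x ↔ Nonempty (LinearMap.range E.mulVecLin ≃ₗ[A] x) :=
  have := hE.invertible_range_mulVecLin
  Pic.mk_eq_iff

theorem mapAlgebra_picClass {S : Type u} [CommRing S] [Algebra A S]
    (hE : E.IsRankOneIdempotent) :
    Pic.mapAlgebra A S hE.picClass = (hE.map (algebraMap A S)).picClass := by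
  have := hE.invertible_range_mulVecLin
  have := (hE.map (algebraMap A S)).invertible_range_mulVecLin
  set e := E.map (algebraMap A S)
  let Φ : S ⊗[A] LinearMap.range E.mulVecLin →ₗ[S] LinearMap.range e.mulVecLin :=
    LinearMap.liftBaseChange S (e.mulVecLin.rangeRestrict.restrictScalars A ∘ₗ
      (Algebra.linearMap A S).compLeft ι ∘ₗ (LinearMap.range E.mulVecLin).subtype)
  have hΦ (w : ι → A) :
      Φ (1 ⊗ₜ E.mulVecLin.rangeRestrict w) = e.mulVecLin.rangeRestrict (algebraMap A S ∘ w) := by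
    ext : 1
    have : algebraMap A S ∘ (E *ᵥ w) = e *ᵥ (algebraMap A S ∘ w) :=
      funext (RingHom.map_mulVec _ E w)
    simp only [Φ, LinearMap.liftBaseChange_tmul, one_smul]
    change e *ᵥ (algebraMap A S ∘ (E *ᵥ w)) = e *ᵥ (algebraMap A S ∘ w)
    rw [this, mulVec_mulVec, (hE.map (algebraMap A S)).mul_self]
  have hsurj : Function.Surjective Φ := by
    intro y
    obtain ⟨v, rfl⟩ := e.mulVecLin.surjective_rangeRestrict y
    refine ⟨∑ j, v j • 1 ⊗ₜ E.mulVecLin.rangeRestrict (Pi.single j 1), ?_⟩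
    have hsingle (j : ι) : algebraMap A S ∘ Pi.single j 1 = Pi.single j 1 := by
      ext i; simp [Pi.single_apply]
    simp only [map_sum, map_smul, hΦ, hsingle]
    conv_rhs => rw [pi_eq_sum_univ' v, map_sum]
    simp only [map_smul]
  rw [Pic.mapAlgebra_apply, picClass, picClass, Pic.mk_eq_mk_iff]
  exact ⟨AlgebraTensorModule.congr (.refl S S) (Pic.mk.linearEquiv A _) ≪≫ₗ
    .ofBijective Φ (Module.Invertible.bijective_of_surjective hsurj)⟩

end Matrix.IsRankOneIdempotent

theorem exists_finite_finitePresentation_algHom_of_isIntegral (R : Type u) {S : Type*}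
    [CommRing R] [CommRing S] [Algebra R S] (t : Finset S) (ht : ∀ x ∈ t, IsIntegral R x) :
    ∃ (A : Type u) (_ : CommRing A) (_ : Algebra R A) (_ : Module.Finite R A)
      (_ : Algebra.FinitePresentation R A) (f : A →ₐ[R] S), ↑t ⊆ Set.range f := by
  classical
  induction t using Finset.induction_on with
  | empty => exact ⟨R, _, _, inferInstance, inferInstance, Algebra.ofId R S, by simp⟩
  | insert a t _ ih =>
    obtain ⟨A, _, _, _, _, f, hf⟩ := ih fun x hx ↦ ht x (Finset.mem_insert_of_mem hx)
    obtain ⟨q, hq, hqa⟩ := ht a (Finset.mem_insert_self a t)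
    let q' := q.map (algebraMap R A)
    have : Module.Finite A (AdjoinRoot q') := (hq.map _).finite_adjoinRoot
    have hroot : q'.eval₂ (f : A →+* S) a = 0 := by
      rwa [Polynomial.eval₂_map, AlgHom.comp_algebraMap]
    refine ⟨AdjoinRoot q', _, _, .trans A _, inferInstance,
      AdjoinRoot.liftAlgHom q' f a hroot, ?_⟩
    rw [Finset.coe_insert, Set.insert_subset_iff]
    refine ⟨⟨AdjoinRoot.root q', AdjoinRoot.liftAlgHom_root ..⟩, fun x hx ↦ ?_⟩
    obtain ⟨y, rfl⟩ := hf hx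
    exact ⟨AdjoinRoot.of q' y, AdjoinRoot.liftAlgHom_of ..⟩

theorem Matrix.IsRankOneIdempotent.exists_finite_finitePresentation_lift (R : Type u) {S : Type*}
    [CommRing R] [CommRing S] [Algebra R S] [Algebra.IsIntegral R S] {ι : Type*} [Fintype ι]
    {e : Matrix ι ι S} (he : e.IsRankOneIdempotent) :
    ∃ (A : Type u) (_ : CommRing A) (_ : Algebra R A) (_ : Module.Finite R A)
      (_ : Algebra.FinitePresentation R A) (f : A →ₐ[R] S) (E : Matrix ι ι A),
      E.IsRankOneIdempotent ∧ E.map f = e := by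
  classical
  obtain ⟨A, _, _, _, _, f, hf⟩ := exists_finite_finitePresentation_algHom_of_isIntegral R
    (Finset.univ.image fun p : ι × ι ↦ e p.1 p.2) fun x _ ↦ Algebra.IsIntegral.isIntegral x
  choose E hE using fun i j ↦ hf (Finset.mem_image_of_mem _ (Finset.mem_univ (i, j)))
  let I := (Matrix.of E).rankOneIdempotentIdeal
  have hI : I ≤ RingHom.ker f := by
    refine (isRankOneIdempotent_map_iff f).1 ?_
    convert he
    ext i j
    exact hE i j
  refine ⟨A ⧸ I, _, _, inferInstance, .quotient (rankOneIdempotentIdeal_fg _),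
    Ideal.Quotient.liftₐ I f hI, (Matrix.of E).map (Ideal.Quotient.mk I),
    (isRankOneIdempotent_map_iff _).2 (by rw [Ideal.mk_ker]), ?_⟩
  ext i j
  exact hE i j

namespace Module.Invertible

variable {S M : Type*} [CommRing S] [AddCommGroup M] [Module S M] [Module.Invertible S M]

theorem apply_mul_apply_comm (f g : Dual S M) (x y : M) : f x * g y = f y * g x := by
  simpa using congrArg (LinearMap.mul' S S ∘ₗ TensorProduct.map f g) (tmul_comm (m₁ := x) (m₂ := y))

open Matrix in
theorem exists_isRankOneIdempotent :
    ∃ (n : ℕ) (e : Matrix (Fin n) (Fin n) S) (_ : e.IsRankOneIdempotent),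
      Nonempty (LinearMap.range e.mulVecLin ≃ₗ[S] M) := by
  obtain ⟨n, f, m, hfm⟩ := exists_sum_tmul_eq ((linearEquiv S M).symm 1)
  let e : Matrix (Fin n) (Fin n) S := .of fun i j ↦ f i (m j)
  have he : e.IsRankOneIdempotent := by
    refine ⟨?_, fun i j k l ↦ apply_mul_apply_comm (f i) (f k) (m j) (m l)⟩
    simpa [linearEquiv, Matrix.trace, e] using (congrArg (linearEquiv S M) hfm).symm
  have := he.invertible_range_mulVecLin
  let F : M →ₗ[S] LinearMap.range e.mulVecLin := e.mulVecLin.rangeRestrict ∘ₗ LinearMap.pi f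
  let G : LinearMap.range e.mulVecLin →ₗ[S] M :=
    Fintype.linearCombination S m ∘ₗ (LinearMap.range e.mulVecLin).subtype
  -- A one-sided inverse between invertible modules is two-sided.
  have hFG : Function.LeftInverse F G := by
    rintro ⟨_, v, rfl⟩
    ext : 1
    have : (fun i ↦ f i (∑ j, (e *ᵥ v) j • m j)) = e *ᵥ (e *ᵥ v) := by
      ext i
      simp [mulVec, dotProduct, e, mul_comm]
    change e *ᵥ (fun i ↦ f i (∑ j, (e *ᵥ v) j • m j)) = e *ᵥ v
    rw [this, mulVec_mulVec, mulVec_mulVec, he.mul_self, he.mul_self]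
  exact ⟨n, e, he, ⟨(linearEquivOfLeftInverse hFG).symm⟩⟩

end Module.Invertible

theorem CommRing.Pic.exists_mem_range_mapRingHom_of_isIntegral (R : Type u) {S : Type u}
    [CommRing R] [CommRing S] [Algebra R S] [Algebra.IsIntegral R S] (x : Pic S) :
    ∃ (A : Type u) (_ : CommRing A) (_ : Algebra R A) (_ : Module.Finite R A)
      (_ : Algebra.FinitePresentation R A) (f : A →ₐ[R] S),
      x ∈ (Pic.mapRingHom f.toRingHom).range := by
  obtain ⟨n, e, he, ⟨φ⟩⟩ := Module.Invertible.exists_isRankOneIdempotent (S := S) (M := x)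
  obtain ⟨A, _, _, hfin, hfp, f, E, hE, rfl⟩ := he.exists_finite_finitePresentation_lift R
  refine ⟨A, _, _, hfin, hfp, f, hE.picClass, ?_⟩
  let := f.toRingHom.toAlgebra
  change Pic.mapAlgebra A S hE.picClass = x
  rw [hE.mapAlgebra_picClass]
  exact (hE.map _).picClass_eq_iff.mpr ⟨φ⟩

/-- If Pic(R') is torsion for every finite and finitely presented R-algebra
R', then Pic(R') is torsion for every R-algebra R' integral over R. -/
theorem picTorsion_integral_of_picTorsion_finite (R : Type) [CommRing R]
    (hP : ∀ (R' : Type) [CommRing R'] [Algebra R R'],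
      Module.Finite R R' → Algebra.FinitePresentation R R' → PicIsTorsion R') :
    ∀ (R' : Type) [CommRing R'] [Algebra R R'], Algebra.IsIntegral R R' → PicIsTorsion R' := by
  intro S _ _ _
  rw [picIsTorsion_iff_isMulTorsion]
  intro x
  obtain ⟨A, _, _, hfin, hfp, f, y, rfl⟩ := Pic.exists_mem_range_mapRingHom_of_isIntegral R x
  exact (Pic.mapRingHom _).isOfFinOrder ((picIsTorsion_iff_isMulTorsion A).mp (hP A hfin hfp) y)
end

section
/- Let R be a commutative ring with spectrum S, and let U be a quasi-compact open subscheme of affine n-space A^n_S that surjects onto S. Then there exist positive integers m_1 = 1, m_2, ..., m_n such that if j : A^1_S → A^n_S is the closed immersion defined by j(t) = (t, t^{m_2}, ..., t^{m_n}), then the open subset j^{-1}(U) of A^1_S surjects onto S. -/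
lemma digits_inj : ∀ (k N : ℕ) (a b : Fin k → ℕ), (∀ i, a i < N) → (∀ i, b i < N) →
    (∑ i, a i * N ^ (i : ℕ)) = (∑ i, b i * N ^ (i : ℕ)) → a = b := by
  intro k
  induction k with
  | zero => intro N a b _ _ _; funext i; exact i.elim0
  | succ k ih =>
    intro N a b ha hb h
    have e : ∀ c : Fin (k + 1) → ℕ,
        (∑ i, c i * N ^ (i : ℕ)) = c 0 + N * ∑ i : Fin k, c i.succ * N ^ (i : ℕ) := by
      intro c
      rw [Fin.sum_univ_succ, Finset.mul_sum]
      congr 1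
      · simp
      · refine Finset.sum_congr rfl fun i _ => ?_
        rw [Fin.val_succ, pow_succ]; ring
    rw [e a, e b] at h
    have hN : 0 < N := lt_of_le_of_lt (Nat.zero_le _) (ha 0)
    have h0 : a 0 = b 0 := by
      have := congrArg (· % N) h
      simpa [Nat.add_mul_mod_self_left, Nat.mod_eq_of_lt (ha 0), Nat.mod_eq_of_lt (hb 0)]
        using this
    have hs : (∑ i : Fin k, a i.succ * N ^ (i : ℕ)) = ∑ i : Fin k, b i.succ * N ^ (i : ℕ) := by
      rw [h0] at h
      exact Nat.eq_of_mul_eq_mul_left hN (Nat.add_left_cancel h)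
    have htail := ih N (fun i => a i.succ) (fun i => b i.succ)
      (fun i => ha i.succ) (fun i => hb i.succ) hs
    funext i
    refine Fin.cases h0 (fun j => ?_) i
    exact congrFun htail j

lemma aeval_monomial_pow {R : Type} [CommRing R] {k : ℕ} (m : Fin k → ℕ)
    (b : Fin k →₀ ℕ) (c : R) :
    (MvPolynomial.aeval fun i => (Polynomial.X : Polynomial R) ^ m i)
        (MvPolynomial.monomial b c)
      = Polynomial.C c * Polynomial.X ^ (∑ i, b i * m i) := by
  rw [MvPolynomial.aeval_monomial]
  have : (b.prod fun n e => ((Polynomial.X : Polynomial R) ^ m n) ^ e)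
      = Polynomial.X ^ ∑ i, b i * m i := by
    rw [Finsupp.prod_fintype _ _ (fun i => pow_zero _)]
    simp_rw [← pow_mul]
    rw [Finset.prod_pow_eq_pow_sum]
    exact congrArg _ (Finset.sum_congr rfl fun i _ => mul_comm _ _)
  rw [this, Polynomial.algebraMap_eq]

lemma coeff_aeval_pow {R : Type} [CommRing R] {k : ℕ} (m : Fin k → ℕ)
    (f : MvPolynomial (Fin k) R) (a : Fin k →₀ ℕ) (ha : a ∈ f.support)
    (hinj : ∀ b ∈ f.support, (∑ i, b i * m i) = (∑ i, a i * m i) → b = a) :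
    ((MvPolynomial.aeval fun i => (Polynomial.X : Polynomial R) ^ m i) f).coeff
        (∑ i, a i * m i) = MvPolynomial.coeff a f := by
  conv_lhs => rw [f.as_sum, map_sum]
  rw [Polynomial.finset_sum_coeff]
  rw [Finset.sum_eq_single a]
  · rw [aeval_monomial_pow, Polynomial.coeff_C_mul, Polynomial.coeff_X_pow, if_pos rfl,
      mul_one]
  · intro b hb hba
    rw [aeval_monomial_pow, Polynomial.coeff_C_mul, Polynomial.coeff_X_pow,
      if_neg (fun h => hba (hinj b hb h.symm)), mul_zero]
  · intro h; exact absurd ha h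

/-- Let U be a quasi-compact open subscheme of affine n-space A^n_S over
S = Spec R that surjects onto S. Then there are positive integers m with m_1 = 1 such
that for the closed immersion j : A^1_S → A^n_S given by t ↦ (t, t^{m_2}, …, t^{m_n})
(i.e. induced by the R-algebra map X_i ↦ t^{m_i}), the open subset j^{-1}(U) still
surjects onto S. Surjectivity onto S is expressed on prime spectra via the structure
maps. -/
theorem exists_weights_line_meets_open (R : Type) [CommRing R] (n : ℕ)
    (U : Set (PrimeSpectrum (MvPolynomial (Fin (n + 1)) R)))
    (hUopen : IsOpen U) (hUqc : IsCompact U)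
    (hUsurj : ∀ p : PrimeSpectrum R, ∃ q ∈ U,
      PrimeSpectrum.comap (MvPolynomial.C : R →+* MvPolynomial (Fin (n + 1)) R) q = p) :
    ∃ m : Fin (n + 1) → ℕ, m 0 = 1 ∧ (∀ i, 0 < m i) ∧
      ∀ p : PrimeSpectrum R, ∃ q : PrimeSpectrum (Polynomial R),
        PrimeSpectrum.comap
          ((MvPolynomial.aeval (fun i => Polynomial.X ^ m i) :
            MvPolynomial (Fin (n + 1)) R →ₐ[R] Polynomial R) : _ →+* Polynomial R) q ∈ U ∧
        PrimeSpectrum.comap (Polynomial.C : R →+* Polynomial R) q = p := by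
  obtain ⟨t, ht⟩ := PrimeSpectrum.isCompact_isOpen_iff.mp ⟨hUqc, hUopen⟩
  set B : ℕ := t.sup fun f => f.support.sup fun a => Finset.univ.sup fun i => a i with hB
  set N : ℕ := B + 1 with hN
  refine ⟨fun i => N ^ (i : ℕ), by simp, fun i => pow_pos (Nat.succ_pos B) _, fun p => ?_⟩
  have hbound : ∀ f ∈ t, ∀ a ∈ f.support, ∀ i : Fin (n + 1), a i < N := by
    intro f hf a haf i
    have h1 : a i ≤ Finset.univ.sup fun i => a i := Finset.le_sup (Finset.mem_univ i)
    have h2 := Finset.le_sup (f := fun a : Fin (n + 1) →₀ ℕ => Finset.univ.sup fun i => a i) haf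
    have h3 := Finset.le_sup (f := fun f : MvPolynomial (Fin (n + 1)) R =>
      f.support.sup fun a => Finset.univ.sup fun i => a i) hf
    omega
  -- find f ∈ t and a coefficient of f not in p
  obtain ⟨q0, hq0U, hq0p⟩ := hUsurj p
  rw [← ht, Set.mem_compl_iff, PrimeSpectrum.mem_zeroLocus] at hq0U
  obtain ⟨f, hft, hfq0⟩ := Set.not_subset.mp hq0U
  have hft' : f ∈ t := hft
  have hCmem : ∀ r : R, r ∈ p.asIdeal → MvPolynomial.C r ∈ q0.asIdeal := by
    intro r hr
    rw [← hq0p] at hr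
    exact hr
  have hcoeff : ∃ a : Fin (n + 1) →₀ ℕ, MvPolynomial.coeff a f ∉ p.asIdeal := by
    by_contra hc
    push_neg at hc
    refine hfq0 ?_
    show f ∈ q0.asIdeal
    nth_rewrite 1 [f.as_sum]
    refine Ideal.sum_mem _ fun a ha => ?_
    rw [MvPolynomial.monomial_eq]
    exact Ideal.mul_mem_right _ _ (hCmem _ (hc a))
  obtain ⟨a, hap⟩ := hcoeff
  have haf : a ∈ f.support := by
    rw [MvPolynomial.mem_support_iff]
    intro h0
    exact hap (h0 ▸ p.asIdeal.zero_mem)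
  -- residue field
  haveI : p.asIdeal.IsPrime := p.2
  set K := FractionRing (R ⧸ p.asIdeal) with hK
  let ψ : Polynomial R →+* Polynomial K := Polynomial.mapRingHom (algebraMap R K)
  have halg : ∀ r : R, algebraMap R K r = 0 ↔ r ∈ p.asIdeal := by
    intro r
    have h1 : Function.Injective (algebraMap (R ⧸ p.asIdeal) K) :=
      IsFractionRing.injective _ _
    rw [IsScalarTower.algebraMap_apply R (R ⧸ p.asIdeal) K,
      ← map_zero (algebraMap (R ⧸ p.asIdeal) K), h1.eq_iff, Ideal.Quotient.algebraMap_eq,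
      Ideal.Quotient.eq_zero_iff_mem]
  refine ⟨⟨RingHom.ker ψ, RingHom.ker_isPrime ψ⟩, ?_, ?_⟩
  · rw [← ht, Set.mem_compl_iff, PrimeSpectrum.mem_zeroLocus]
    intro hsub
    have hf2 := hsub hft
    rw [SetLike.mem_coe, PrimeSpectrum.comap_asIdeal, Ideal.mem_comap, RingHom.mem_ker] at hf2
    have hker : ψ ((MvPolynomial.aeval fun i : Fin (n + 1) =>
        (Polynomial.X : Polynomial R) ^ N ^ (i : ℕ)) f) = 0 := hf2
    have hco := congrArg (fun g => Polynomial.coeff g (∑ i, a i * N ^ (i : ℕ))) hker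
    simp only [Polynomial.coeff_map, Polynomial.coeff_zero, ψ, Polynomial.coe_mapRingHom] at hco
    rw [coeff_aeval_pow _ f a haf ?_] at hco
    · exact hap ((halg _).mp hco)
    · intro b hb hweq
      have := digits_inj (n + 1) N b a (hbound f hft' b hb) (hbound f hft' a haf) hweq
      exact DFunLike.coe_injective this
  · apply PrimeSpectrum.ext
    ext r
    rw [PrimeSpectrum.comap_asIdeal, Ideal.mem_comap]
    show Polynomial.C r ∈ RingHom.ker ψ ↔ _
    rw [RingHom.mem_ker]
    show Polynomial.map (algebraMap R K) (Polynomial.C r) = 0 ↔ _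
    rw [Polynomial.map_C, ← Polynomial.C_0, Polynomial.C_inj, halg]
end

section
/- Let R be a commutative ring and let f_1, ..., f_k be polynomials in R[X_1, ..., X_n]. Suppose m_2, ..., m_n are positive integers such that the linear form (x_1,...,x_n) ↦ x_1 + Σ_{ℓ=2}^n m_ℓ x_ℓ is injective on the set of all multi-exponents occurring in the f_i. Then for each i, the one-variable polynomial f_i(t, t^{m_2}, ..., t^{m_n}) in R[t] has exactly the same set of coefficients as f_i; in particular, the ideal of R generated by the coefficients of the f_i(t, t^{m_2},...,t^{m_n}) equals the ideal generated by the coefficients of the f_i. -/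
open MvPolynomial

/-- The set of nonzero coefficients of a multivariate polynomial. -/
def mvCoeffSet {R : Type} [CommRing R] {n : ℕ} (f : MvPolynomial (Fin n) R) : Set R :=
  {c | c ≠ 0 ∧ ∃ d : Fin n →₀ ℕ, f.coeff d = c}

/-- The set of nonzero coefficients of a one-variable polynomial. -/
def coeffSet {R : Type} [CommRing R] (g : Polynomial R) : Set R :=
  {c | c ≠ 0 ∧ ∃ e : ℕ, g.coeff e = c}

/-- If the weighted-sum form x ↦ x_1 + Σ_{ℓ≥2} m_ℓ x_ℓ (with m_1 = 1 and all
m_ℓ > 0) is injective on the set of multi-exponents occurring in polynomials f_1,…,f_k in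
R[X_1,…,X_n], then substituting X_1 = t, X_ℓ = t^{m_ℓ} gives one-variable polynomials with
exactly the same sets of (nonzero) coefficients; in particular, the ideal generated by all
the coefficients of the substituted polynomials equals the ideal generated by all the
coefficients of the f_i. -/
theorem coeff_set_eq_of_injective_weights (R : Type) [CommRing R] (n k : ℕ)
    (f : Fin k → MvPolynomial (Fin (n + 1)) R) (m : Fin (n + 1) → ℕ)
    (hm0 : m 0 = 1) (hmpos : ∀ i, 0 < m i)
    (hinj : Set.InjOn (fun d : Fin (n + 1) →₀ ℕ => ∑ i, m i * d i)
      {d | ∃ i, (f i).coeff d ≠ 0}) :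
    (∀ i, coeffSet (MvPolynomial.aeval (fun j => Polynomial.X ^ m j) (f i))
        = mvCoeffSet (f i)) ∧
      Ideal.span (⋃ i, coeffSet (MvPolynomial.aeval (fun j => Polynomial.X ^ m j) (f i)))
        = Ideal.span (⋃ i, mvCoeffSet (f i)) := by
  have key : ∀ i, coeffSet (MvPolynomial.aeval (fun j => Polynomial.X ^ m j) (f i))
      = mvCoeffSet (f i) := by
    intro i
    have hrep : (MvPolynomial.aeval (fun j => Polynomial.X ^ m j) (f i) : Polynomial R)
        = ∑ d ∈ (f i).support,
            Polynomial.C ((f i).coeff d) * Polynomial.X ^ (∑ l, m l * d l) := by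
      conv_lhs => rw [(f i).as_sum]
      rw [map_sum]
      refine Finset.sum_congr rfl fun d hd => ?_
      rw [aeval_monomial]
      congr 1
      rw [Finsupp.prod_fintype _ _ (fun l => pow_zero _)]
      simp only [← pow_mul]
      rw [Finset.prod_pow_eq_pow_sum]
    have hcoeff : ∀ e, (MvPolynomial.aeval (fun j => Polynomial.X ^ m j) (f i)).coeff e
        = ∑ d ∈ (f i).support, if (∑ l, m l * d l) = e then (f i).coeff d else 0 := by
      intro e
      rw [hrep, Polynomial.finset_sum_coeff]
      refine Finset.sum_congr rfl fun d hd => ?_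
      simp [Polynomial.coeff_X_pow, mul_ite, eq_comm]
    have huniq : ∀ d ∈ (f i).support,
        (MvPolynomial.aeval (fun j => Polynomial.X ^ m j) (f i)).coeff (∑ l, m l * d l)
          = (f i).coeff d := by
      intro d hd
      rw [hcoeff]
      rw [Finset.sum_eq_single d]
      · simp
      · intro d' hd' hne
        rw [if_neg]
        intro h
        exact hne (hinj ⟨i, MvPolynomial.mem_support_iff.mp hd'⟩
          ⟨i, MvPolynomial.mem_support_iff.mp hd⟩ h)
      · intro h; exact absurd hd h
    ext c
    constructor
    · rintro ⟨hc0, e, rfl⟩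
      refine ⟨hc0, ?_⟩
      have hne := hc0
      rw [hcoeff] at hne
      obtain ⟨d, hd, hdne⟩ := Finset.exists_ne_zero_of_sum_ne_zero hne
      have hwd : (∑ l, m l * d l) = e := by
        by_contra h
        simp [h] at hdne
      exact ⟨d, by rw [← huniq d hd, hwd]⟩
    · rintro ⟨hc0, d, rfl⟩
      have hd : d ∈ (f i).support := MvPolynomial.mem_support_iff.mpr hc0
      exact ⟨hc0, ∑ l, m l * d l, huniq d hd⟩
  exact ⟨key, by simp_rw [key]⟩
end
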